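/- arXiv:1107.2876 — 2 statements merged into one kernel-verified Lean document; each statement's English description precedes it below -/
import Mathlib

section
/- Let ν ∈ (0,1], λ_α, λ_β > 0, k ≥ 1 an integer, and u ∈ [0,1) with λ_α^ν (1−u)^ν > λ_β. Then the probability generating function of the composition Ñ^ν(k) = N_α(τ_k^ν) satisfies ∫_0^∞ e^{−λ_α(1−u) s} · λ_β^k Σ_{j=0}^∞ (−1)^j C(k+j−1, j) λ_β^j s^{ν(k+j)−1}/Γ(ν(k+j)) ds = (1 + (1−u)^ν · λ_α^ν/λ_β)^{−k}; in particular Ñ^ν(k) has a Linnik-type distribution. -/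
open Real MeasureTheory Set

/-!
Integrating term by term, the Laplace transform at `c = λ_α (1 - u)` of `s^{a-1}/Γ(a)` is
`c^{-a}`, so the density `f_k^ν` transforms into the negative binomial series
`x^k Σ_j (-1)^j C(k+j-1, j) x^j = (x / (1 + x))^k` with `x = λ_β c^{-ν}`. The condition
`λ_β < c^ν` says exactly that `x < 1`; it makes the series of absolute values converge, which
justifies the interchange of sum and integral.
-/

theorem hasSum_neg_one_pow_mul_choose_mul_pow {𝕜 : Type*} [NormedField 𝕜]
    [HasSummableGeomSeries 𝕜] (k : ℕ) {x : 𝕜} (hx : ‖x‖ < 1) :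
    HasSum (fun j : ℕ => (-1) ^ j * ((k + j - 1).choose j : 𝕜) * x ^ j)
      ((1 + x) ^ k)⁻¹ := by
  cases k with
  | zero =>
    convert hasSum_ite_eq (0 : ℕ) (1 : 𝕜) using 2 with j
    · rcases j with _ | j <;> simp
    · simp
  | succ m =>
    have hneg : ‖-x‖ < 1 := by rwa [norm_neg]
    convert hasSum_choose_mul_geometric_of_norm_lt_one m hneg using 2 with j
    · rw [show m + 1 + j - 1 = j + m by omega, Nat.choose_symm_add, neg_pow]
      ring
    · simp [sub_neg_eq_add]

section LaplaceTransform

variable {a c : ℝ}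

theorem integrableOn_exp_neg_mul_mul_rpow_sub_one (ha : 0 < a) (hc : 0 < c) :
    IntegrableOn (fun s : ℝ => exp (-c * s) * s ^ (a - 1)) (Ioi 0) :=
  (integrableOn_rpow_mul_exp_neg_mul_rpow (s := a - 1) (by linarith) one_pos hc).congr_fun
    (fun s _ => by simp only [rpow_one, mul_comm]) measurableSet_Ioi

theorem integral_exp_neg_mul_mul_rpow_sub_one (ha : 0 < a) (hc : 0 < c) :
    ∫ s in Ioi 0, exp (-c * s) * s ^ (a - 1) = Gamma a * c ^ (-a) := by
  rw [rpow_neg hc.le, ← inv_rpow hc.le, ← one_div, mul_comm,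
    ← integral_rpow_mul_exp_neg_mul_Ioi ha hc]
  simp only [neg_mul, mul_comm (exp _)]

theorem integral_exp_neg_mul_mul_tsum_rpow_div_Gamma {a b : ℕ → ℝ} (ha : ∀ j, 0 < a j)
    (hc : 0 < c) (hb : Summable fun j => |b j| * c ^ (-a j)) :
    ∫ s in Ioi 0, exp (-c * s) * ∑' j, b j * s ^ (a j - 1) / Gamma (a j) =
      ∑' j, b j * c ^ (-a j) := by
  set F : ℕ → ℝ → ℝ := fun j s => b j / Gamma (a j) * (exp (-c * s) * s ^ (a j - 1))
  have hΓ : ∀ j, 0 < Gamma (a j) := fun j => Gamma_pos_of_pos (ha j)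
  have hF_int : ∀ j, IntegrableOn (F j) (Ioi 0) := fun j =>
    (integrableOn_exp_neg_mul_mul_rpow_sub_one (ha j) hc).const_mul _
  have hF_integral : ∀ j, ∫ s in Ioi 0, F j s = b j * c ^ (-a j) := fun j => by
    rw [integral_const_mul, integral_exp_neg_mul_mul_rpow_sub_one (ha j) hc]
    field_simp [(hΓ j).ne']
  have hF_norm : ∀ j, ∫ s in Ioi 0, ‖F j s‖ = |b j| * c ^ (-a j) := fun j => by
    have hF_abs : ∀ s ∈ Ioi (0 : ℝ),
        ‖F j s‖ = |b j| / Gamma (a j) * (exp (-c * s) * s ^ (a j - 1)) :=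
        fun s (hs : 0 < s) => by
      have hkernel : 0 ≤ exp (-c * s) * s ^ (a j - 1) := by positivity
      rw [norm_mul, norm_div, Real.norm_of_nonneg (hΓ j).le, Real.norm_of_nonneg hkernel,
        Real.norm_eq_abs]
    rw [setIntegral_congr_fun measurableSet_Ioi hF_abs, integral_const_mul,
      integral_exp_neg_mul_mul_rpow_sub_one (ha j) hc]
    field_simp [(hΓ j).ne']
  calc ∫ s in Ioi 0, exp (-c * s) * ∑' j, b j * s ^ (a j - 1) / Gamma (a j)
      = ∫ s in Ioi 0, ∑' j, F j s := by
        congr 1 with s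
        rw [← tsum_mul_left]
        congr 1 with j
        ring
    _ = ∑' j, ∫ s in Ioi 0, F j s :=
        (integral_tsum_of_summable_integral_norm hF_int (hb.congr fun j => (hF_norm j).symm)).symm
    _ = ∑' j, b j * c ^ (-a j) := tsum_congr hF_integral

end LaplaceTransform

noncomputable def fracPoissonHittingDensity (ν lβ : ℝ) (k : ℕ) (s : ℝ) : ℝ :=
  lβ ^ k * ∑' j : ℕ, (-1 : ℝ) ^ j * ((k + j - 1).choose j : ℝ) * lβ ^ j *
    s ^ (ν * ((k : ℝ) + j) - 1) / Gamma (ν * ((k : ℝ) + j))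

section FracPoissonHittingDensity

variable {ν lβ c : ℝ}

theorem hasSum_fracPoissonHittingDensity_laplace_terms (hβ : 0 < lβ) (hc : 0 < c)
    (hcond : lβ < c ^ ν) (k : ℕ) :
    HasSum (fun j : ℕ => lβ ^ k * ((-1) ^ j * ((k + j - 1).choose j : ℝ) * lβ ^ j) *
      c ^ (-(ν * ((k : ℝ) + j)))) ((1 + c ^ ν / lβ) ^ (-(k : ℤ))) := by
  set x := lβ * c ^ (-ν) with hx_def
  have hx_pos : 0 < x := by positivity
  have hx_norm : ‖x‖ < 1 := by
    rwa [norm_of_nonneg hx_pos.le, hx_def, rpow_neg hc.le, ← div_eq_mul_inv,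
      div_lt_one (by positivity)]
  have hterm : ∀ j : ℕ, lβ ^ k * ((-1) ^ j * ((k + j - 1).choose j : ℝ) * lβ ^ j) *
      c ^ (-(ν * ((k : ℝ) + j))) =
        x ^ k * ((-1) ^ j * ((k + j - 1).choose j : ℝ) * x ^ j) := by
    intro j
    rw [show -(ν * ((k : ℝ) + j)) = -ν * ((k + j : ℕ) : ℝ) by push_cast; ring,
      rpow_mul hc.le, rpow_natCast, hx_def, mul_pow, mul_pow, pow_add]
    ring
  have hbase : 1 + c ^ ν / lβ = (1 + x) / x := by
    rw [hx_def, rpow_neg hc.le]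
    field_simp
    ring
  rw [funext hterm, hbase, zpow_neg, zpow_natCast, div_pow, inv_div, div_eq_mul_inv]
  exact (hasSum_neg_one_pow_mul_choose_mul_pow k hx_norm).mul_left _

theorem integral_exp_neg_mul_mul_fracPoissonHittingDensity (hν : 0 < ν) (hβ : 0 < lβ)
    (hc : 0 < c) (hcond : lβ < c ^ ν) {k : ℕ} (hk : 1 ≤ k) :
    ∫ s in Ioi 0, exp (-c * s) * fracPoissonHittingDensity ν lβ k s =
      (1 + c ^ ν / lβ) ^ (-(k : ℤ)) := by
  have hsum := hasSum_fracPoissonHittingDensity_laplace_terms hβ hc hcond k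
  have habs : Summable fun j : ℕ =>
      |lβ ^ k * ((-1) ^ j * ((k + j - 1).choose j : ℝ) * lβ ^ j)| *
        c ^ (-(ν * ((k : ℝ) + j))) :=
    (summable_abs_iff.mpr hsum.summable).congr fun j => by
      rw [abs_mul, abs_of_pos (rpow_pos_of_pos hc _)]
  have hk' : (0 : ℝ) < k := by exact_mod_cast hk
  rw [← hsum.tsum_eq, ← integral_exp_neg_mul_mul_tsum_rpow_div_Gamma
    (fun j => by positivity) hc habs]
  refine setIntegral_congr_fun measurableSet_Ioi fun s _ => ?_
  rw [fracPoissonHittingDensity, ← tsum_mul_left]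
  exact congrArg _ (tsum_congr fun j => by ring)

end FracPoissonHittingDensity

/-- the probability generating function of `Ñ^ν(k) = N_α(τ_k^ν)`:
`∫_0^∞ e^{−λ_α(1−u)s} f_k^ν(s) ds = (1 + (1−u)^ν λ_α^ν/λ_β)^{−k}`,
a Linnik-type distribution. -/
theorem pgf_poisson_at_fractional_hitting (ν lα lβ u : ℝ) (hν : ν ∈ Set.Ioc (0 : ℝ) 1)
    (hα : 0 < lα) (hβ : 0 < lβ) (k : ℕ) (hk : 1 ≤ k) (hu : u ∈ Set.Ico (0 : ℝ) 1)
    (hcond : lβ < lα ^ ν * (1 - u) ^ ν) :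
    ∫ s in Set.Ioi (0 : ℝ), Real.exp (-lα * (1 - u) * s) *
      (lβ ^ k * ∑' j : ℕ, (-1 : ℝ) ^ j * ((k + j - 1).choose j : ℝ) * lβ ^ j *
        s ^ (ν * ((k : ℝ) + j) - 1) / Real.Gamma (ν * ((k : ℝ) + j))) =
    (1 + (1 - u) ^ ν * lα ^ ν / lβ) ^ (-(k : ℤ)) := by
  have h1u : 0 < 1 - u := by linarith [hu.2]
  have hcν : (lα * (1 - u)) ^ ν = (1 - u) ^ ν * lα ^ ν := by
    rw [mul_rpow hα.le h1u.le, mul_comm]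
  rw [← hcν, ← integral_exp_neg_mul_mul_fracPoissonHittingDensity hν.1 hβ (mul_pos hα h1u)
    (by rwa [mul_rpow hα.le h1u.le]) hk, neg_mul_eq_neg_mul]
  rfl
end

section
/- Let ν ∈ (0,1], λ_α, λ_β > 0, k ≥ 1 an integer, and u ∈ [0,1) with λ_α^ν (1−u)^ν > k λ_β. Set x = λ_α^ν (1−u)^ν / λ_β and let E_{ν,ν}(z) = Σ_{n=0}^∞ z^n/Γ(νn+ν). Then the probability generating function of the Poisson process N_α composed with the inverse φ_k^ν of an independent fractional linear pure birth process satisfies ∫_0^∞ e^{−λ_α(1−u) s} · Σ_{l=1}^{k} C(k, l) (−1)^{l−1} λ_β l s^{ν−1} E_{ν,ν}(−λ_β l s^ν) ds = k! · Γ(x + 1) / Γ(x + 1 + k). -/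
/-!
Expanding `E_{ν,ν}` termwise, the Laplace transform of `s^{ν-1} E_{ν,ν}(z s^ν)` at `p` is the
geometric series `Σ_n z^n / p^{ν(n+1)} = 1 / (p^ν - z)`; summation and integration may be exchanged
because the series of the absolute values is again geometric, with ratio `|z| / p^ν < 1`. For
`p = λ_α (1 - u)` and `z = -λ_β l`, `l ≤ k`, that ratio is `λ_β l / (λ_α (1 - u))^ν < 1`, and
the integral becomes `Σ_l C(k,l) (-1)^{l-1} l / (x + l)`. The partial fraction identity
`Σ_{l ≤ k} (-1)^l C(k,l) / (x + l) = k! Γ(x) / Γ(x + k + 1)`, proved by induction on `k` through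
Pascal's rule, evaluates this sum after `l C(k,l) = k C(k-1,l-1)`.
-/

open Real

/-- The two-parameter Mittag–Leffler function `E_{ν,ν}(z) = Σ_{n=0}^∞ z^n / Γ(νn + ν)`. -/
noncomputable def mittagLeffler2 (ν z : ℝ) : ℝ :=
  ∑' n : ℕ, z ^ n / Real.Gamma (ν * n + ν)

open MeasureTheory Set Finset Nat

theorem MeasureTheory.integrable_tsum_of_summable_integral_norm {α E ι : Type*}
    [MeasurableSpace α] {μ : Measure α} [NormedAddCommGroup E] [CompleteSpace E]
    [SecondCountableTopology E] [MeasurableSpace E] [BorelSpace E] [Countable ι]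
    {F : ι → α → E} (hF_int : ∀ i, Integrable (F i) μ)
    (hF_sum : Summable fun i ↦ ∫ a, ‖F i a‖ ∂μ) :
    Integrable (fun a ↦ ∑' i, F i a) μ := by
  refine ⟨(AEMeasurable.tsum fun i ↦ (hF_int i).aemeasurable).aestronglyMeasurable, ?_⟩
  calc ∫⁻ a, ‖∑' i, F i a‖ₑ ∂μ ≤ ∫⁻ a, ∑' i, ‖F i a‖ₑ ∂μ :=
        lintegral_mono fun a ↦ enorm_tsum_le_tsum_enorm
    _ = ∑' i, ENNReal.ofReal (∫ a, ‖F i a‖ ∂μ) := by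
        rw [lintegral_tsum fun i ↦ (hF_int i).aemeasurable.enorm]
        simp_rw [ofReal_integral_norm_eq_lintegral_enorm (hF_int _)]
    _ < ⊤ := hF_sum.tsum_ofReal_lt_top

theorem integrableOn_rpow_sub_one_mul_exp_neg_mul {a p : ℝ} (ha : 0 < a) (hp : 0 < p) :
    IntegrableOn (fun s : ℝ ↦ s ^ (a - 1) * exp (-(p * s))) (Ioi 0) := by
  simpa [neg_mul] using
    integrableOn_rpow_mul_exp_neg_mul_rpow (p := 1) (by linarith : -1 < a - 1) one_pos hp

noncomputable def mittagLeffler2LaplaceTerm (ν p z : ℝ) (n : ℕ) (s : ℝ) : ℝ :=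
  z ^ n / Gamma (ν * (n + 1)) * (s ^ (ν * (n + 1) - 1) * exp (-(p * s)))

section Laplace

variable {ν p z : ℝ}

theorem exp_mul_rpow_mul_mittagLeffler2_eq_tsum {s : ℝ} (hs : 0 < s) :
    exp (-(p * s)) * (s ^ (ν - 1) * mittagLeffler2 ν (z * s ^ ν)) =
      ∑' n, mittagLeffler2LaplaceTerm ν p z n s := by
  simp only [mittagLeffler2, mittagLeffler2LaplaceTerm, ← tsum_mul_left]
  refine tsum_congr fun n ↦ ?_
  have hpow : s ^ (ν - 1) * (z * s ^ ν) ^ n = z ^ n * s ^ (ν * (n + 1) - 1) := by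
    rw [mul_pow, ← rpow_natCast (s ^ ν), ← rpow_mul hs.le, mul_left_comm, ← rpow_add hs]
    ring_nf
  rw [show ν * n + ν = ν * (n + 1) by ring, ← mul_div_assoc, hpow]
  ring

theorem integrableOn_mittagLeffler2LaplaceTerm (hν : 0 < ν) (hp : 0 < p) (n : ℕ) :
    IntegrableOn (mittagLeffler2LaplaceTerm ν p z n) (Ioi 0) :=
  (integrableOn_rpow_sub_one_mul_exp_neg_mul (by positivity) hp).const_mul _

theorem integral_mittagLeffler2LaplaceTerm (hν : 0 < ν) (hp : 0 < p) (n : ℕ) :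
    ∫ s in Ioi 0, mittagLeffler2LaplaceTerm ν p z n s = (p ^ ν)⁻¹ * (z / p ^ ν) ^ n := by
  have hΓ : Gamma (ν * (n + 1)) ≠ 0 := (Gamma_pos_of_pos (by positivity)).ne'
  have hpν : p ^ ν ≠ 0 := (rpow_pos_of_pos hp ν).ne'
  simp only [mittagLeffler2LaplaceTerm]
  rw [integral_const_mul, integral_rpow_mul_exp_neg_mul_Ioi (by positivity) hp, one_div,
    inv_rpow hp.le, rpow_mul hp.le, ← Nat.cast_add_one, rpow_natCast, div_pow]
  field_simp
  ring

theorem norm_mittagLeffler2LaplaceTerm (hν : 0 < ν) (n : ℕ) {s : ℝ} (hs : 0 < s) :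
    ‖mittagLeffler2LaplaceTerm ν p z n s‖ = mittagLeffler2LaplaceTerm ν p |z| n s := by
  have hΓ : 0 < Gamma (ν * (n + 1)) := Gamma_pos_of_pos (by positivity)
  simp only [mittagLeffler2LaplaceTerm, norm_mul, norm_div, norm_pow, Real.norm_eq_abs,
    abs_of_pos hΓ, abs_of_pos (exp_pos _), abs_of_pos (rpow_pos_of_pos hs _)]

theorem summable_integral_norm_mittagLeffler2LaplaceTerm (hν : 0 < ν) (hp : 0 < p)
    (hz : |z| < p ^ ν) :
    Summable fun n ↦ ∫ s in Ioi 0, ‖mittagLeffler2LaplaceTerm ν p z n s‖ := by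
  have hnorm (n : ℕ) : ∫ s in Ioi 0, ‖mittagLeffler2LaplaceTerm ν p z n s‖ =
      (p ^ ν)⁻¹ * (|z| / p ^ ν) ^ n := by
    rw [setIntegral_congr_fun measurableSet_Ioi fun s hs ↦
      norm_mittagLeffler2LaplaceTerm hν n hs, integral_mittagLeffler2LaplaceTerm hν hp]
  simp_rw [hnorm]
  exact (summable_geometric_of_lt_one (by positivity)
    ((div_lt_one (rpow_pos_of_pos hp ν)).2 hz)).mul_left _

theorem integrableOn_exp_mul_rpow_mul_mittagLeffler2 (hν : 0 < ν) (hp : 0 < p)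
    (hz : |z| < p ^ ν) :
    IntegrableOn (fun s ↦ exp (-(p * s)) * (s ^ (ν - 1) * mittagLeffler2 ν (z * s ^ ν)))
      (Ioi 0) :=
  IntegrableOn.congr_fun
    (integrable_tsum_of_summable_integral_norm (integrableOn_mittagLeffler2LaplaceTerm hν hp)
      (summable_integral_norm_mittagLeffler2LaplaceTerm hν hp hz))
    (fun _ hs ↦ (exp_mul_rpow_mul_mittagLeffler2_eq_tsum hs).symm) measurableSet_Ioi

theorem integral_exp_mul_rpow_mul_mittagLeffler2 (hν : 0 < ν) (hp : 0 < p)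
    (hz : |z| < p ^ ν) :
    ∫ s in Ioi 0, exp (-(p * s)) * (s ^ (ν - 1) * mittagLeffler2 ν (z * s ^ ν)) =
      (p ^ ν - z)⁻¹ := by
  have hpν : 0 < p ^ ν := rpow_pos_of_pos hp ν
  have hq : |z / p ^ ν| < 1 := by rwa [abs_div, abs_of_pos hpν, div_lt_one hpν]
  rw [setIntegral_congr_fun measurableSet_Ioi fun _ hs ↦
      exp_mul_rpow_mul_mittagLeffler2_eq_tsum hs,
    ← integral_tsum_of_summable_integral_norm (integrableOn_mittagLeffler2LaplaceTerm hν hp)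
      (summable_integral_norm_mittagLeffler2LaplaceTerm hν hp hz)]
  simp_rw [integral_mittagLeffler2LaplaceTerm hν hp]
  rw [tsum_mul_left, tsum_geometric_of_abs_lt_one hq]
  have : p ^ ν - z ≠ 0 := by linarith [le_abs_self z]
  field_simp

end Laplace

theorem sum_range_neg_one_pow_mul_choose_div_add (k : ℕ) {x : ℝ} (hx : ∀ n : ℕ, x + n ≠ 0) :
    ∑ l ∈ range (k + 1), (-1 : ℝ) ^ l * k.choose l / (x + l) =
      k ! * Gamma x / Gamma (x + k + 1) := by
  induction k generalizing x with
  | zero =>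
    have hx0 : x ≠ 0 := by simpa using hx 0
    have hΓ : Gamma x ≠ 0 := Gamma_ne_zero fun m h ↦ hx m (by linarith)
    simp only [zero_add, range_one, sum_singleton, pow_zero, choose_self, cast_one, mul_one,
      cast_zero, add_zero, one_div, factorial_zero, one_mul, Gamma_add_one hx0]
    field_simp
  | succ k ih =>
    have hx1 (n : ℕ) : x + 1 + n ≠ 0 := by
      simpa [add_assoc, add_comm (1 : ℝ)] using hx (n + 1)
    have pascal : ∑ l ∈ range (k + 2), (-1 : ℝ) ^ l * (k + 1).choose l / (x + l) =
        ∑ l ∈ range (k + 1), (-1 : ℝ) ^ l * k.choose l / (x + l) -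
          ∑ l ∈ range (k + 1), (-1 : ℝ) ^ l * k.choose l / (x + 1 + l) := by
      have extend : ∑ l ∈ range (k + 1), (-1 : ℝ) ^ l * k.choose l / (x + l) =
          ∑ l ∈ range (k + 2), (-1 : ℝ) ^ l * k.choose l / (x + l) := by
        simp [sum_range_succ _ (k + 1)]
      have shift : ∀ m ∈ range (k + 1), (-1 : ℝ) ^ (m + 1) * k.choose m / (x + (m + 1)) =
          -((-1 : ℝ) ^ m * k.choose m / (x + 1 + m)) := fun m _ ↦ by ring
      rw [extend, sum_range_succ', sum_range_succ' _ (k + 1)]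
      simp only [Nat.choose_succ_succ]
      push_cast
      simp only [mul_add, add_div, sum_add_distrib]
      rw [sum_congr rfl shift, sum_neg_distrib]
      simp only [pow_zero, choose_zero_right, cast_one, mul_one, add_zero]
      ring
    have hx0 : x ≠ 0 := by simpa using hx 0
    have hxk : x + k + 1 ≠ 0 := by simpa [add_assoc] using hx (k + 1)
    have hΓ : Gamma (x + k + 1) ≠ 0 :=
      Gamma_ne_zero fun m h ↦ hx (k + 1 + m) (by push_cast; linarith)
    rw [pascal, ih hx, ih hx1, Gamma_add_one hx0, factorial_succ]
    push_cast
    rw [show x + 1 + k + 1 = x + k + 1 + 1 by ring, show x + (k + 1) + 1 = x + k + 1 + 1 by ring,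
      Gamma_add_one hxk]
    field_simp
    ring

theorem sum_Icc_choose_mul_neg_one_pow_mul_div_add {k : ℕ} (hk : 1 ≤ k) {x : ℝ}
    (hx : ∀ n : ℕ, x + 1 + n ≠ 0) :
    ∑ l ∈ Icc 1 k, (k.choose l : ℝ) * (-1) ^ (l - 1) * (l / (x + l)) =
      k ! * Gamma (x + 1) / Gamma (x + 1 + k) := by
  obtain ⟨n, rfl⟩ := Nat.exists_eq_add_of_le' hk
  have hterm : ∀ m ∈ range (n + 1),
      ((n + 1).choose (m + 1) : ℝ) * (-1) ^ (m + 1 - 1) * ((m + 1 : ℕ) / (x + (m + 1 : ℕ))) =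
        (n + 1) * ((-1) ^ m * n.choose m / (x + 1 + m)) := fun m _ ↦ by
    have hchoose : ((n : ℝ) + 1) * n.choose m = (n + 1).choose (m + 1) * (m + 1) := by
      exact_mod_cast Nat.add_one_mul_choose_eq n m
    push_cast
    rw [show ((n : ℝ) + 1) * ((-1) ^ m * n.choose m / (x + 1 + m)) =
      (-1) ^ m * ((n + 1) * n.choose m) / (x + (m + 1)) by ring, hchoose]
    ring
  have reindex (f : ℕ → ℝ) : ∑ l ∈ Icc 1 (n + 1), f l = ∑ m ∈ range (n + 1), f (m + 1) := by
    rw [range_eq_Ico, sum_Ico_add', zero_add, Finset.Ico_add_one_right_eq_Icc]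
  rw [reindex, sum_congr rfl hterm, ← mul_sum, sum_range_neg_one_pow_mul_choose_div_add n hx,
    factorial_succ]
  push_cast
  rw [← add_assoc]
  ring

/-- the probability generating function of the Poisson process composed with
the inverse `φ_k^ν` of an independent fractional linear pure birth process:
`∫_0^∞ e^{−λ_α(1−u)s} Σ_{l=1}^k C(k,l)(−1)^{l−1} λ_β l s^{ν−1} E_{ν,ν}(−λ_β l s^ν) ds
 = k! Γ(x+1)/Γ(x+1+k)` with `x = λ_α^ν(1−u)^ν/λ_β`. -/
theorem pgf_poisson_at_inverse_fractional_birth (ν lα lβ u : ℝ)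
    (hν : ν ∈ Set.Ioc (0 : ℝ) 1) (hα : 0 < lα) (hβ : 0 < lβ) (k : ℕ) (hk : 1 ≤ k)
    (hu : u ∈ Set.Ico (0 : ℝ) 1) (hcond : (k : ℝ) * lβ < lα ^ ν * (1 - u) ^ ν) :
    ∫ s in Set.Ioi (0 : ℝ), Real.exp (-lα * (1 - u) * s) *
      ∑ l ∈ Finset.Icc 1 k, (k.choose l : ℝ) * (-1 : ℝ) ^ (l - 1) *
        (lβ * l * s ^ (ν - 1) * mittagLeffler2 ν (-lβ * l * s ^ ν)) =
    (Nat.factorial k : ℝ) * Real.Gamma (lα ^ ν * (1 - u) ^ ν / lβ + 1) /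
      Real.Gamma (lα ^ ν * (1 - u) ^ ν / lβ + 1 + k) := by
  have hp : 0 < lα * (1 - u) := mul_pos hα (by linarith [hu.2])
  have hexp (s : ℝ) : -lα * (1 - u) * s = -(lα * (1 - u) * s) := by ring
  simp_rw [hexp, ← mul_rpow hα.le (by linarith [hu.2] : (0 : ℝ) ≤ 1 - u)]
  rw [← mul_rpow hα.le (by linarith [hu.2])] at hcond
  generalize lα * (1 - u) = p at hp hcond ⊢
  have hz : ∀ l ∈ Finset.Icc 1 k, |-lβ * l| < p ^ ν := fun l hl ↦ by
    obtain ⟨hl1, hlk⟩ := Finset.mem_Icc.1 hl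
    have : (0 : ℝ) < l := by exact_mod_cast hl1
    have : (l : ℝ) ≤ k := by exact_mod_cast hlk
    rw [neg_mul, abs_neg, abs_of_pos (by positivity)]
    nlinarith
  calc _ = ∫ s in Ioi 0, ∑ l ∈ Finset.Icc 1 k, (k.choose l : ℝ) * (-1) ^ (l - 1) * (lβ * l) *
          (exp (-(p * s)) * (s ^ (ν - 1) * mittagLeffler2 ν (-lβ * l * s ^ ν))) := by
        simp_rw [mul_sum]; congr! 3; ring
    _ = ∑ l ∈ Finset.Icc 1 k, (k.choose l : ℝ) * (-1) ^ (l - 1) * (lβ * l) *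
          (p ^ ν - -lβ * l)⁻¹ := by
        rw [integral_finsetSum _ fun l hl ↦
          (integrableOn_exp_mul_rpow_mul_mittagLeffler2 hν.1 hp (hz l hl)).const_mul _]
        refine sum_congr rfl fun l hl ↦ ?_
        rw [integral_const_mul, integral_exp_mul_rpow_mul_mittagLeffler2 hν.1 hp (hz l hl)]
    _ = ∑ l ∈ Finset.Icc 1 k, (k.choose l : ℝ) * (-1) ^ (l - 1) * (l / (p ^ ν / lβ + l)) := by
        refine sum_congr rfl fun l _ ↦ ?_
        have : 0 < p ^ ν + lβ * l := by positivity
        rw [neg_mul, sub_neg_eq_add]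
        field_simp
    _ = _ := sum_Icc_choose_mul_neg_one_pow_mul_div_add hk fun n ↦ by positivity
end
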